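/- Let d ≥ 1 and let ℙ be the i.i.d. Dirichlet environment on ℤ^d with parameters (β_1, …, β_{2d}). For i ∈ ℤ let l_i = {x ∈ ℤ^d : x·e_1 = i} and t_i = inf{n ≥ 0 : X_n ∈ l_i and X_{n+1} ∉ l_i}. Then for every i with P_0(t_i < ∞) > 0, the annealed conditional probability satisfies P_0(X_{t_i+1} − X_{t_i} = e_1 | t_i < ∞) = β_1/(β_1 + β_{1+d}). Consequently, P_0(there exists 0 ≤ i ≤ L−1 with t_i < ∞ and X_{t_i+1} − X_{t_i} = −e_1) ≤ L·β_{1+d}/(β_1 + β_{1+d}). -/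

import Mathlib

open MeasureTheory Filter Topology
open scoped ENNReal NNReal Classical BigOperators

namespace RWRE

/-- Sites of the lattice `ℤ^d`. -/
abbrev V (d : ℕ) := Fin d → ℤ

/-- The `2d` canonical unit vectors: `dir d i = e_{i+1}` for `i < d`, and
`dir d i = -e_{i-d+1}` for `d ≤ i < 2d`. -/
def dir (d : ℕ) (i : Fin (2 * d)) : V d :=
  fun j => if (j : ℕ) = (i : ℕ) ∨ (j : ℕ) + d = (i : ℕ) then (if (i : ℕ) < d then 1 else -1) else 0

/-- The index of the direction opposite to direction `i`. -/
def opp {d : ℕ} (i : Fin (2 * d)) : Fin (2 * d) :=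
  ⟨if (i : ℕ) < d then (i : ℕ) + d else (i : ℕ) - d, by have := i.isLt; split <;> omega⟩

/-- The set `𝒫` of probability vectors on the `2d` directions. -/
abbrev Simplex (d : ℕ) := {p : Fin (2 * d) → ℝ // (∀ i, 0 ≤ p i) ∧ ∑ i, p i = 1}

/-- The environment space `Ω = 𝒫^{ℤ^d}`. -/
abbrev Env (d : ℕ) := V d → Simplex d

/-- The space of trajectories of the walk. -/
abbrev Traj (d : ℕ) := ℕ → V d

/-- Transition probability of the walk from `y` to `z` in environment `ω`. -/
noncomputable def trans (d : ℕ) (ω : Env d) (y z : V d) : ℝ :=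
  ∑ i : Fin (2 * d), if z = y + dir d i then (ω y).1 i else 0

/-- `Pq` is the family of quenched laws: `Pq ω x` is a probability measure on trajectories,
starting at `x`, whose cylinder probabilities are given by the products of the transition
probabilities of the environment `ω`. -/
def IsQuenchedLaw (d : ℕ) (Pq : Env d → V d → Measure (Traj d)) : Prop :=
  (∀ ω x, IsProbabilityMeasure (Pq ω x)) ∧
  ∀ (ω : Env d) (x : V d) (n : ℕ) (σ : ℕ → V d),
    (Pq ω x {f | ∀ k ≤ n, f k = σ k}).toReal =
      (if σ 0 = x then 1 else 0) * ∏ k ∈ Finset.range n, trans d ω (σ k) (σ (k + 1))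

/-- The annealed (averaged) law `P_x = ∫ P_{x,ω} dℙ`. -/
noncomputable def annealed (d : ℕ) (ℙ : Measure (Env d)) (Pq : Env d → V d → Measure (Traj d))
    (x : V d) : Measure (Traj d) :=
  ℙ.bind (fun ω => Pq ω x)

/-- `{ω(x) : x ∈ ℤ^d}` are i.i.d. under `ℙ`, with one-site marginal `μ`. -/
def IsIIDWith (d : ℕ) (ℙ : Measure (Env d)) (μ : Measure (Simplex d)) : Prop :=
  IsProbabilityMeasure ℙ ∧ IsProbabilityMeasure μ ∧
  ∀ (s : Finset (V d)) (A : V d → Set (Simplex d)), (∀ x, MeasurableSet (A x)) →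
    ℙ {ω | ∀ x ∈ s, ω x ∈ A x} = ∏ x ∈ s, μ (A x)

/-- `{ω(x) : x ∈ ℤ^d}` are i.i.d. under `ℙ`. -/
def IsIID (d : ℕ) (ℙ : Measure (Env d)) : Prop :=
  ∃ μ : Measure (Simplex d), IsIIDWith d ℙ μ

/-- `ℙ` is elliptic. -/
def IsElliptic (d : ℕ) (ℙ : Measure (Env d)) : Prop :=
  ∀ (x : V d) (i : Fin (2 * d)), ℙ {ω | 0 < (ω x).1 i} = 1

/-- First exit time from a set `A` (with value `0` by convention if the walk never leaves `A`). -/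
noncomputable def exitTime (d : ℕ) (A : Set (V d)) (f : Traj d) : ℕ :=
  sInf {n | f n ∉ A}

/-- The coordinates of a site, as a real vector. -/
def toR (d : ℕ) (x : V d) : Fin d → ℝ := fun j => (x j : ℝ)

/-- Euclidean inner product of a site with a real vector `l`. -/
noncomputable def dotl (d : ℕ) (l : Fin d → ℝ) (x : V d) : ℝ :=
  ∑ j, (x j : ℝ) * l j

/-- The first canonical basis vector `e_1` of `ℝ^d`. -/
def e1 (d : ℕ) : Fin d → ℝ := fun j => if (j : ℕ) = 0 then 1 else 0

/-- `R` is a rotation of `ℝ^d`: a linear automorphism preserving the Euclidean inner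
product, with determinant one. -/
def IsRotation (d : ℕ) (R : (Fin d → ℝ) ≃ₗ[ℝ] (Fin d → ℝ)) : Prop :=
  (∀ u v : Fin d → ℝ, ∑ j, R u j * R v j = ∑ j, u j * v j) ∧
    LinearMap.det (R : (Fin d → ℝ) →ₗ[ℝ] (Fin d → ℝ)) = 1

/-- The box `B_{l,L,L̃} = R((-L,L) × (-L̃,L̃)^{d-1}) ∩ ℤ^d`, where `R` is a rotation
with `R e_1 = l`. -/
def box (d : ℕ) (R : (Fin d → ℝ) ≃ₗ[ℝ] (Fin d → ℝ)) (L Lt : ℝ) : Set (V d) :=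
  {x | ∀ j : Fin d,
    if (j : ℕ) = 0 then -L < R.symm (toR d x) j ∧ R.symm (toR d x) j < L
    else -Lt < R.symm (toR d x) j ∧ R.symm (toR d x) j < Lt}

/-- The polynomial condition `(P)_M` in direction `l` on a box of size `L`. -/
def PolyCond (d : ℕ) (ℙ : Measure (Env d)) (Pq : Env d → V d → Measure (Traj d))
    (l : Fin d → ℝ) (M L : ℝ) : Prop :=
  ∃ Lt : ℝ, 0 < Lt ∧ Lt ≤ 70 * L ^ 3 ∧
  ∃ R : (Fin d → ℝ) ≃ₗ[ℝ] (Fin d → ℝ), IsRotation d R ∧ R (e1 d) = l ∧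
    ((annealed d ℙ Pq 0) {f | dotl d l (f (exitTime d (box d R L Lt) f)) < L}).toReal ≤ 1 / L ^ M

/-- The quantity `η_α = max_{e ∈ U} 𝔼[ω(0,e)^{-α}]`. -/
noncomputable def eta (d : ℕ) (ℙ : Measure (Env d)) (α : ℝ) : ℝ≥0∞ :=
  ⨆ i : Fin (2 * d), ∫⁻ ω, ENNReal.ofReal ((ω 0).1 i ^ (-α)) ∂ℙ

/-- `ᾱ = sup{α ≥ 0 : η_α < ∞}`. -/
noncomputable def alphaBar (d : ℕ) (ℙ : Measure (Env d)) : ℝ :=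
  sSup {α : ℝ | 0 ≤ α ∧ eta d ℙ α < ⊤}

/-- The constant `c_0 = (2/3)·3^{120d⁴ + 3000d(log η_{ᾱ/2})²}`. -/
noncomputable def c0 (d : ℕ) (ℙ : Measure (Env d)) : ℝ :=
  (2 / 3) * (3 : ℝ) ^ (120 * (d : ℝ) ^ 4 +
    3000 * (d : ℝ) * (Real.log (eta d ℙ (alphaBar d ℙ / 2)).toReal) ^ 2)

/-- The ellipticity condition `(E')_β`. -/
def CondE (d : ℕ) (ℙ : Measure (Env d)) (β : ℝ) : Prop :=
  ∃ α : Fin (2 * d) → ℝ, (∀ i, 0 < α i) ∧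
    (∀ i, 2 * (∑ j, α j) - (α i + α (opp i)) > β) ∧
    ∀ i : Fin (2 * d),
      ∫⁻ ω, ∏ j ∈ Finset.univ.erase i, ENNReal.ofReal ((ω 0).1 j ^ (-(α j))) ∂ℙ < ⊤


/-- First `n` with `P n`, as an extended natural number (`⊤` if there is none). -/
noncomputable def firstTime (P : ℕ → Prop) : ℕ∞ :=
  if ∃ n, P n then ((sInf {n | P n} : ℕ) : ℕ∞) else ⊤

/-- The triple `(S_k, R_k, M_k)` of the regeneration construction in direction `l`
with parameter `a`. -/
noncomputable def SR (d : ℕ) (l : Fin d → ℝ) (a : ℝ) (f : Traj d) : ℕ → ℕ∞ × ℕ∞ × ℝ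
  | 0 => (0, 0, dotl d l (f 0))
  | (k + 1) =>
      let M := (SR d l a f k).2.2
      let S : ℕ∞ := firstTime fun n => M + a ≤ dotl d l (f n)
      let s : ℕ := S.toNat
      let R : ℕ∞ := if S = ⊤ then ⊤ else
        S + firstTime fun n => dotl d l (f (s + n)) < dotl d l (f s)
      let M' : ℝ := sSup {r : ℝ | ∃ n : ℕ, (n : ℕ∞) ≤ R ∧ r = dotl d l (f n)}
      (S, R, M')

/-- The first regeneration time `τ_1` in direction `l` with parameter `a`. -/
noncomputable def tau1 (d : ℕ) (l : Fin d → ℝ) (a : ℝ) (f : Traj d) : ℕ∞ :=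
  if _h : ∃ k : ℕ, 1 ≤ k ∧ (SR d l a f k).1 ≠ ⊤ ∧ (SR d l a f k).2.1 = ⊤ then
    (SR d l a f (sInf {k : ℕ | 1 ≤ k ∧ (SR d l a f k).1 ≠ ⊤ ∧ (SR d l a f k).2.1 = ⊤})).1
  else ⊤

/-- The event `τ_1 > u` for a real threshold `u`. -/
def tau1Gt (d : ℕ) (l : Fin d → ℝ) (a : ℝ) (u : ℝ) : Set (Traj d) :=
  {f | ∀ k : ℕ, tau1 d l a f = (k : ℕ∞) → u < (k : ℝ)}

/-- `v` is the asymptotic direction of the walk under the law `P0`: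
`X_n/|X_n|₂ → v` almost surely. -/
def HasAsympDir (d : ℕ) (P0 : Measure (Traj d)) (v : Fin d → ℝ) : Prop :=
  ∀ᵐ f ∂P0, Tendsto
    (fun n => fun j : Fin d => (f n j : ℝ) / Real.sqrt (∑ j', ((f n j' : ℝ)) ^ 2))
    atTop (𝓝 v)

/-- `γ` is the centered Gaussian measure on `ι → ℝ` with covariance matrix `C`:
every linear functional pushes it forward to a one-dimensional centered Gaussian with
the corresponding variance. -/
def IsCenteredGaussian {ι : Type*} [Fintype ι] (γ : Measure (ι → ℝ)) (C : ι → ι → ℝ) : Prop :=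
  ∀ u : ι → ℝ, γ.map (fun x => ∑ i, u i * x i) =
    ProbabilityTheory.gaussianReal 0 (Real.toNNReal (∑ i, ∑ j, u i * C i j * u j))

/-- `ε^{1/2}(X_{⌊ε⁻¹n⌋} - ⌊ε⁻¹n⌋ v)` converges in law under `P0`, as `ε → 0`, to a Brownian
motion with non-degenerate covariance matrix `C`: the finite-dimensional distributions at any
times `t : Fin k → ℕ` converge weakly to the centered Gaussian with covariance
`min(t_p, t_q)·C`. -/
def CLTtoBM (d : ℕ) (P0 : Measure (Traj d)) (v : Fin d → ℝ)
    (Cmat : Matrix (Fin d) (Fin d) ℝ) : Prop :=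
  ∀ (k : ℕ) (t : Fin k → ℕ),
    ∃ γ : Measure (Fin k × Fin d → ℝ), IsProbabilityMeasure γ ∧
      IsCenteredGaussian γ (fun p q => (min (t p.1) (t q.1) : ℝ) * Cmat p.2 q.2) ∧
      ∀ g : BoundedContinuousFunction ((Fin k × Fin d) → ℝ) ℝ,
        Tendsto (fun ε : ℝ =>
            ∫ f : Traj d, g (fun p =>
              Real.sqrt ε * ((f (⌊(t p.1 : ℝ) / ε⌋₊) p.2 : ℝ) - (⌊(t p.1 : ℝ) / ε⌋₊ : ℝ) * v p.2))
              ∂P0)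
          (𝓝[>] (0 : ℝ)) (𝓝 (∫ x, g x ∂γ))

/-- `μ` is the Dirichlet distribution with parameters `β` on the simplex, characterized by
its (joint polynomial) moments. -/
def IsDirichlet (d : ℕ) (μ : Measure (Simplex d)) (β : Fin (2 * d) → ℝ) : Prop :=
  IsProbabilityMeasure μ ∧
  ∀ k : Fin (2 * d) → ℕ,
    ∫ p, ∏ i, (p.1 i) ^ (k i) ∂μ =
      (Real.Gamma (∑ i, β i) / Real.Gamma ((∑ i, β i) + (∑ i, (k i : ℝ)))) *
        ∏ i, (Real.Gamma (β i + k i) / Real.Gamma (β i))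

/-! ### Directed graph structure on `ℤ^d` and flows -/

/-- Directed nearest-neighbour edges of `ℤ^d`: the pair `(z, i)` represents the edge from
`z` to `z + dir d i`. -/
abbrev Edge (d : ℕ) := V d × Fin (2 * d)

def tail (d : ℕ) (e : Edge d) : V d := e.1

def head (d : ℕ) (e : Edge d) : V d := e.1 + dir d e.2

/-- Divergence of an edge function at a vertex. -/
noncomputable def divg (d : ℕ) (θ : Edge d → ℝ) (v : V d) : ℝ :=
  (∑ᶠ e ∈ {e : Edge d | tail d e = v}, θ e) - ∑ᶠ e ∈ {e : Edge d | head d e = v}, θ e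

/-- `θ` is a flow from `A` to `Z` on the directed graph `(ℤ^d, E_{ℤ^d})`. -/
def IsFlow (d : ℕ) (θ : Edge d → ℝ) (A Z : Set (V d)) : Prop :=
  (∀ e, 0 ≤ θ e) ∧ (∀ v, v ∉ A ∪ Z → divg d θ v = 0) ∧
    (∀ v ∈ A, 0 ≤ divg d θ v) ∧ (∀ v ∈ Z, divg d θ v ≤ 0)

/-- `θ` is a unit flow from `A` to `Z`. -/
def IsUnitFlow (d : ℕ) (θ : Edge d → ℝ) (A Z : Set (V d)) : Prop :=
  IsFlow d θ A Z ∧ ∑ᶠ v ∈ A, divg d θ v = 1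

/-- The first time the walk leaves the hyperplane `l_i = {x : x·e₁ = i}` after having
reached it (`t_i` in the paper, with value `0` by convention if there is no such time). -/
noncomputable def hitLevelTime (d : ℕ) (hd : 0 < d) (i : ℤ) (f : Traj d) : ℕ :=
  sInf {n | f n ⟨0, hd⟩ = i ∧ f (n + 1) ⟨0, hd⟩ ≠ i}

/-- The event that `t_i` is finite. -/
def hitLevelFinite (d : ℕ) (hd : 0 < d) (i : ℤ) : Set (Traj d) :=
  {f | ∃ n : ℕ, f n ⟨0, hd⟩ = i ∧ f (n + 1) ⟨0, hd⟩ ≠ i}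
section Aux
variable {d : ℕ}

lemma dir_ne_zero_iff {i : Fin (2*d)} {j : Fin d} :
    dir d i j ≠ 0 ↔ ((j:ℕ) = i ∨ (j:ℕ) + d = i) := by
  unfold dir
  constructor
  · intro h; by_contra hc; simp [hc] at h
  · intro h; rw [if_pos h]; split <;> norm_num

lemma dir_injective (d : ℕ) : Function.Injective (dir d) := by
  intro i i' h
  have hi := i.isLt; have hi' := i'.isLt
  have key : ∀ a b : Fin (2*d), dir d a = dir d b → (a:ℕ) < d → ((b:ℕ) = a ∨ ((b:ℕ) < d ∧ False)) ∨ True := by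
    intro a b _ _; right; trivial
  rcases lt_or_ge (i:ℕ) d with h1 | h1
  · have hj : (i:ℕ) < d := h1
    have e1 : dir d i ⟨(i:ℕ), hj⟩ = 1 := by
      unfold dir; rw [if_pos (Or.inl rfl), if_pos h1]
    have e2 : dir d i' ⟨(i:ℕ), hj⟩ = 1 := by rw [← h]; exact e1
    unfold dir at e2
    by_cases hc : ((i:ℕ) = (i':ℕ) ∨ (i:ℕ) + d = (i':ℕ))
    · rw [if_pos hc] at e2
      rcases lt_or_ge (i':ℕ) d with h2 | h2
      · rw [if_pos h2] at e2
        rcases hc with hc | hc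
        · exact Fin.ext hc
        · omega
      · rw [if_neg (by omega)] at e2; norm_num at e2
    · rw [if_neg hc] at e2; norm_num at e2
  · have hj : (i:ℕ) - d < d := by omega
    have e1 : dir d i ⟨(i:ℕ) - d, hj⟩ = -1 := by
      unfold dir; simp only [Fin.val_mk]; rw [if_pos (Or.inr (by omega)), if_neg (by omega)]
    have e2 : dir d i' ⟨(i:ℕ) - d, hj⟩ = -1 := by rw [← h]; exact e1
    unfold dir at e2; simp only [Fin.val_mk] at e2
    by_cases hc : ((i:ℕ) - d = (i':ℕ) ∨ (i:ℕ) - d + d = (i':ℕ))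
    · rcases hc with hc | hc
      · rw [if_pos (Or.inl hc)] at e2
        rw [if_pos (by omega)] at e2; norm_num at e2
      · exact Fin.ext (by omega)
    · rw [if_neg hc] at e2; norm_num at e2

lemma add_dir_injective (y : V d) : Function.Injective (fun i => y + dir d i) := by
  intro a b h; exact dir_injective d (by simpa using h)

variable (hd : 0 < d)

/-- first coordinate of `dir`. -/
lemma dir_coord0 (i : Fin (2*d)) :
    dir d i ⟨0, hd⟩ = if (i:ℕ) = 0 then 1 else if (i:ℕ) = d then -1 else 0 := by
  have hi := i.isLt
  unfold dir
  simp only [Fin.val_mk]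
  split_ifs <;> omega

lemma dir_coord0_ne_zero {i : Fin (2*d)} :
    dir d i ⟨0, hd⟩ ≠ 0 ↔ ((i:ℕ) = 0 ∨ (i:ℕ) = d) := by
  rw [dir_coord0 hd]
  split_ifs <;> simp_all <;> omega

end Aux
section Basics
variable {d : ℕ}

lemma simplex_nonneg (p : Simplex d) (i : Fin (2*d)) : 0 ≤ p.1 i := p.2.1 i

lemma simplex_le_one (p : Simplex d) (i : Fin (2*d)) : p.1 i ≤ 1 := by
  calc p.1 i ≤ ∑ j, p.1 j := Finset.single_le_sum (fun j _ => p.2.1 j) (Finset.mem_univ i)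
  _ = 1 := p.2.2

lemma trans_nonneg (ω : Env d) (y z : V d) : 0 ≤ trans d ω y z := by
  refine Finset.sum_nonneg fun i _ => ?_
  split
  · exact simplex_nonneg _ _
  · exact le_refl 0

lemma trans_eq_of_step (ω : Env d) (y : V d) (j : Fin (2*d)) :
    trans d ω y (y + dir d j) = (ω y).1 j := by
  unfold trans
  rw [Finset.sum_eq_single j]
  · rw [if_pos rfl]
  · intro i _ hij
    rw [if_neg]
    intro hcon
    exact hij ((add_dir_injective y hcon).symm)
  · intro h; exact absurd (Finset.mem_univ j) h

lemma trans_eq_zero (ω : Env d) {y z : V d} (h : ∀ j, z ≠ y + dir d j) :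
    trans d ω y z = 0 := by
  unfold trans
  refine Finset.sum_eq_zero fun i _ => if_neg (h i)

lemma trans_le_one (ω : Env d) (y z : V d) : trans d ω y z ≤ 1 := by
  by_cases h : ∀ j, z ≠ y + dir d j
  · rw [trans_eq_zero ω h]; norm_num
  · push_neg at h
    obtain ⟨j, rfl⟩ := h
    rw [trans_eq_of_step]
    exact simplex_le_one _ _

lemma measurable_env_coord (y : V d) (i : Fin (2*d)) :
    Measurable (fun ω : Env d => (ω y).1 i) :=
  ((measurable_pi_apply i).comp measurable_subtype_coe).comp (measurable_pi_apply y)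

lemma measurable_simplex_coord (i : Fin (2*d)) :
    Measurable (fun p : Simplex d => p.1 i) :=
  (measurable_pi_apply i).comp measurable_subtype_coe

lemma measurable_trans (y z : V d) : Measurable (fun ω : Env d => trans d ω y z) := by
  unfold trans
  refine Finset.measurable_sum _ fun i _ => ?_
  by_cases h : z = y + dir d i
  · simpa [h] using measurable_env_coord y i
  · simpa [h] using measurable_const (α := ℝ)

lemma measurableSet_V (A : Set (V d)) : MeasurableSet A := by
  have hsing : ∀ v : V d, MeasurableSet ({v} : Set (V d)) := by
    intro v
    have : ({v} : Set (V d)) = ⋂ j, (fun x : V d => x j) ⁻¹' {v j} := by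
      ext x; simp [funext_iff]
    rw [this]
    exact MeasurableSet.iInter fun j => (measurable_pi_apply j) (measurableSet_singleton _)
  have : A = ⋃ v ∈ A, ({v} : Set (V d)) := by simp
  rw [this]
  exact MeasurableSet.biUnion (Set.to_countable A) fun v _ => hsing v

lemma measurable_traj_coord (k : ℕ) : Measurable (fun f : Traj d => f k) :=
  measurable_pi_apply k

/-- cylinder sets -/
def cylSet (d n : ℕ) (σ : ℕ → V d) : Set (Traj d) := {f | ∀ k ≤ n, f k = σ k}

def CylCol (d : ℕ) : Set (Set (Traj d)) := {S | ∃ n σ, S = cylSet d n σ}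

lemma measurableSet_cylSet (n : ℕ) (σ : ℕ → V d) : MeasurableSet (cylSet d n σ) := by
  have : cylSet d n σ = ⋂ k ∈ Set.Iic n, (fun f : Traj d => f k) ⁻¹' {σ k} := by
    ext f; simp [cylSet]
  rw [this]
  exact MeasurableSet.biInter (Set.to_countable _)
    fun k _ => (measurable_traj_coord k) (measurableSet_V _)

/-- extension of a finite path to `ℕ → V d` -/
def pext (d n : ℕ) (g : Fin (n+1) → V d) : ℕ → V d :=
  fun k => if h : k ≤ n then g ⟨k, by omega⟩ else 0

lemma pext_le {n : ℕ} (g : Fin (n+1) → V d) {k : ℕ} (hk : k ≤ n) :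
    pext d n g k = g ⟨k, by omega⟩ := dif_pos hk

lemma isPiSystem_cyl : IsPiSystem (CylCol d) := by
  have aux : ∀ (n m : ℕ) (σ τ : ℕ → V d), n ≤ m →
      (cylSet d n σ ∩ cylSet d m τ).Nonempty →
      cylSet d n σ ∩ cylSet d m τ ∈ CylCol d := by
    intro n m σ τ hnm ⟨f, hf1, hf2⟩
    have agree : ∀ k ≤ n, σ k = τ k := fun k hk =>
      (hf1 k hk).symm.trans (hf2 k (hk.trans hnm))
    have : cylSet d n σ ∩ cylSet d m τ = cylSet d m τ := by
      ext f'
      constructor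
      · exact fun h => h.2
      · exact fun h => ⟨fun k hk => (h k (hk.trans hnm)).trans (agree k hk).symm, h⟩
    rw [this]
    exact ⟨m, τ, rfl⟩
  rintro S ⟨n, σ, rfl⟩ T ⟨m, τ, rfl⟩ hne
  rcases le_total n m with h | h
  · exact aux n m σ τ h hne
  · rw [Set.inter_comm] at hne ⊢
    exact aux m n τ σ h hne

lemma traj_gen :
    (inferInstance : MeasurableSpace (Traj d)) = MeasurableSpace.generateFrom (CylCol d) := by
  refine le_antisymm ?_ ?_
  · refine iSup_le fun k => ?_
    rintro A ⟨B, _, rfl⟩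
    have hone : ∀ v : V d, MeasurableSet[MeasurableSpace.generateFrom (CylCol d)]
        ((fun f : Traj d => f k) ⁻¹' {v}) := by
      intro v
      have : (fun f : Traj d => f k) ⁻¹' {v} =
          ⋃ g : {g : Fin (k+1) → V d // g ⟨k, Nat.lt_succ_self k⟩ = v},
            cylSet d k (pext d k g.1) := by
        ext f
        simp only [Set.mem_preimage, Set.mem_singleton_iff, Set.mem_iUnion]
        constructor
        · intro hf
          refine ⟨⟨fun j => f j, hf⟩, fun j hj => ?_⟩
          rw [pext_le _ hj]
        · rintro ⟨g, hg⟩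
          have := hg k le_rfl
          rw [pext_le _ le_rfl] at this
          rw [this]
          exact g.2
      rw [this]
      exact MeasurableSet.iUnion fun g =>
        MeasurableSpace.measurableSet_generateFrom ⟨k, _, rfl⟩
    have : (fun f : Traj d => f k) ⁻¹' B = ⋃ v ∈ B, (fun f : Traj d => f k) ⁻¹' {v} := by
      ext f; simp
    rw [this]
    exact MeasurableSet.biUnion (Set.to_countable B) fun v _ => hone v
  · refine MeasurableSpace.generateFrom_le ?_
    rintro S ⟨n, σ, rfl⟩
    exact measurableSet_cylSet n σ

end Basics
section Kernel
variable {d : ℕ} {Pq : Env d → V d → Measure (Traj d)}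

lemma Pq_cyl (hQ : IsQuenchedLaw d Pq) (ω : Env d) (x : V d) (n : ℕ) (σ : ℕ → V d) :
    Pq ω x (cylSet d n σ) =
      ENNReal.ofReal ((if σ 0 = x then 1 else 0) *
        ∏ k ∈ Finset.range n, trans d ω (σ k) (σ (k + 1))) := by
  haveI := hQ.1 ω x
  have h : (Pq ω x (cylSet d n σ)).toReal =
      (if σ 0 = x then 1 else 0) * ∏ k ∈ Finset.range n, trans d ω (σ k) (σ (k + 1)) :=
    hQ.2 ω x n σ
  have : Pq ω x (cylSet d n σ) = ENNReal.ofReal ((Pq ω x (cylSet d n σ)).toReal) :=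
    (ENNReal.ofReal_toReal (measure_ne_top _ _)).symm
  rw [this, h]

lemma measurable_Pq_set (hQ : IsQuenchedLaw d Pq) {S : Set (Traj d)} (hS : MeasurableSet S) :
    Measurable (fun ω => Pq ω 0 S) := by
  refine MeasurableSpace.induction_on_inter (C := fun S _ => Measurable fun ω => Pq ω 0 S)
    traj_gen isPiSystem_cyl ?_ ?_ ?_ ?_ _ hS
  · simp only [measure_empty]; exact measurable_const
  · rintro S ⟨n, σ, rfl⟩
    simp only [Pq_cyl hQ]
    refine ENNReal.measurable_ofReal.comp ?_
    exact (measurable_const.mul (Finset.measurable_prod _ fun k _ => measurable_trans _ _))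
  · intro t ht hmt
    have : ∀ ω, Pq ω 0 tᶜ = 1 - Pq ω 0 t := by
      intro ω
      haveI := hQ.1 ω 0
      exact prob_compl_eq_one_sub ht
    simp only [this]
    exact measurable_const.sub hmt
  · intro f hdisj hmeas hm
    have : ∀ ω, Pq ω 0 (⋃ i, f i) = ∑' i, Pq ω 0 (f i) := fun ω =>
      measure_iUnion hdisj hmeas
    simp only [this]
    exact Measurable.ennreal_tsum hm

lemma measurable_Pq0 (hQ : IsQuenchedLaw d Pq) : Measurable (fun ω => Pq ω 0) :=
  Measure.measurable_of_measurable_coe _ fun _ hS => measurable_Pq_set hQ hS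

lemma annealed_apply (hQ : IsQuenchedLaw d Pq) (ℙ : Measure (Env d))
    {S : Set (Traj d)} (hS : MeasurableSet S) :
    annealed d ℙ Pq 0 S = ∫⁻ ω, Pq ω 0 S ∂ℙ :=
  Measure.bind_apply hS (measurable_Pq0 hQ).aemeasurable

lemma annealed_prob (hQ : IsQuenchedLaw d Pq) (ℙ : Measure (Env d))
    [IsProbabilityMeasure ℙ] : IsProbabilityMeasure (annealed d ℙ Pq 0) := by
  constructor
  rw [annealed_apply hQ ℙ MeasurableSet.univ]
  have : ∀ ω : Env d, Pq ω 0 Set.univ = 1 := fun ω => (hQ.1 ω 0).measure_univ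
  simp only [this, lintegral_one, measure_univ, mul_one]

end Kernel
section IIDfact

lemma lintegral_pi_prod_fin {α : Type*} [MeasurableSpace α] (μ0 : Measure α)
    [IsProbabilityMeasure μ0] :
    ∀ (n : ℕ) (g : Fin n → α → ℝ≥0∞), (∀ i, Measurable (g i)) →
    ∫⁻ x : Fin n → α, ∏ i, g i (x i) ∂Measure.pi (fun _ => μ0) = ∏ i, ∫⁻ y, g i y ∂μ0 := by
  intro n
  induction n with
  | zero =>
    intro g _
    simp only [Finset.univ_eq_empty, Finset.prod_empty, lintegral_one, measure_univ]
  | succ n ih =>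
    intro g hg
    have hmp := measurePreserving_piFinSuccAbove (fun _ : Fin (n+1) => μ0) 0
    set e := MeasurableEquiv.piFinSuccAbove (fun _ : Fin (n+1) => α) 0 with he
    have hF : Measurable fun x : Fin (n+1) → α => ∏ i, g i (x i) :=
      Finset.measurable_prod _ fun i _ => (hg i).comp (measurable_pi_apply i)
    have step1 : ∫⁻ x : Fin (n+1) → α, ∏ i, g i (x i) ∂Measure.pi (fun _ => μ0) =
        ∫⁻ z : α × (Fin n → α), ∏ i, g i (e.symm z i)
          ∂(μ0.prod (Measure.pi (fun _ : Fin n => μ0))) :=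
      ((MeasurePreserving.symm e hmp).lintegral_comp hF).symm
    have h0 : ∀ z : α × (Fin n → α), (e.symm z) 0 = z.1 := by
      intro z; rw [he]; simp
    have hsA : ∀ (z : α × (Fin n → α)) (j : Fin n),
        (e.symm z) (Fin.succAbove 0 j) = z.2 j := by
      intro z j; rw [he]; simp
    have step2 : ∀ z : α × (Fin n → α),
        ∏ i, g i (e.symm z i) = g 0 z.1 * ∏ j : Fin n, g ((0:Fin (n+1)).succAbove j) (z.2 j) := by
      intro z
      rw [Fin.prod_univ_succAbove (fun i => g i (e.symm z i)) 0, h0 z]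
      exact congrArg _ (Finset.prod_congr rfl fun j _ => by rw [hsA z j])
    have hsplit : ∫⁻ z : α × (Fin n → α),
        g 0 z.1 * ∏ j : Fin n, g ((0:Fin (n+1)).succAbove j) (z.2 j)
          ∂(μ0.prod (Measure.pi fun _ : Fin n => μ0)) =
        (∫⁻ y, g 0 y ∂μ0) *
          ∫⁻ x : Fin n → α, ∏ j : Fin n, g ((0:Fin (n+1)).succAbove j) (x j)
            ∂(Measure.pi fun _ : Fin n => μ0) :=
      lintegral_prod_mul (hg 0).aemeasurable
        ((Finset.measurable_prod _ fun j _ =>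
          (hg _).comp (measurable_pi_apply j)).aemeasurable)
    rw [step1]
    simp only [step2]
    rw [hsplit, ih (fun j => g ((0:Fin (n+1)).succAbove j)) (fun j => hg _)]
    rw [Fin.prod_univ_succAbove (fun i => ∫⁻ y, g i y ∂μ0) 0]

lemma lintegral_pi_prod {α : Type*} [MeasurableSpace α] {ι : Type*} [Fintype ι]
    (μ0 : Measure α) [IsProbabilityMeasure μ0]
    (g : ι → α → ℝ≥0∞) (hg : ∀ i, Measurable (g i)) :
    ∫⁻ x : ι → α, ∏ i, g i (x i) ∂Measure.pi (fun _ => μ0) = ∏ i, ∫⁻ y, g i y ∂μ0 := by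
  obtain ⟨n, ⟨e⟩⟩ : ∃ n, Nonempty (Fin n ≃ ι) := ⟨Fintype.card ι, ⟨Fintype.equivFin ι |>.symm⟩⟩
  have hmp := MeasureTheory.measurePreserving_piCongrLeft (fun _ : ι => μ0) e
  have hF : Measurable fun x : ι → α => ∏ i, g i (x i) :=
    Finset.measurable_prod _ fun i _ => (hg i).comp (measurable_pi_apply i)
  have step1 : ∫⁻ x : ι → α, ∏ i, g i (x i) ∂Measure.pi (fun _ => μ0) =
      ∫⁻ x : Fin n → α, ∏ i, g i ((MeasurableEquiv.piCongrLeft (fun _ => α) e) x i)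
        ∂Measure.pi (fun _ : Fin n => μ0) := (hmp.lintegral_comp hF).symm
  rw [step1]
  have step2 : ∀ x : Fin n → α,
      ∏ i, g i ((MeasurableEquiv.piCongrLeft (fun _ => α) e) x i) =
        ∏ j : Fin n, g (e j) (x j) := by
    intro x
    rw [← Equiv.prod_comp e (fun i => g i ((MeasurableEquiv.piCongrLeft (fun _ => α) e) x i))]
    refine Finset.prod_congr rfl fun j _ => ?_
    congr 1
    show (Equiv.piCongrLeft (fun _ => α) e) x (e j) = x j
    exact Equiv.piCongrLeft_apply_apply (fun _ => α) e x j
  simp only [step2]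
  rw [lintegral_pi_prod_fin μ0 n (fun j => g (e j)) (fun j => hg _)]
  exact Equiv.prod_comp e (fun i => ∫⁻ y, g i y ∂μ0)

variable {d : ℕ}

lemma iid_map_pi {ℙ : Measure (Env d)} {μ : Measure (Simplex d)}
    (hIID : IsIIDWith d ℙ μ) (s : Finset (V d)) :
    ℙ.map (fun ω (y : s) => ω y.1) = Measure.pi (fun _ : s => μ) := by
  haveI := hIID.2.1
  have hΦ : Measurable (fun ω : Env d => (fun y : s => ω y.1)) :=
    measurable_pi_lambda _ fun y => measurable_pi_apply _
  refine (Measure.pi_eq fun A hA => ?_).symm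
  rw [Measure.map_apply hΦ (MeasurableSet.univ_pi hA)]
  classical
  let A' : V d → Set (Simplex d) := fun x => if h : x ∈ s then A ⟨x, h⟩ else Set.univ
  have key : ∀ (x) (hx : x ∈ s), A' x = A ⟨x, hx⟩ := fun x hx => dif_pos hx
  have hA'm : ∀ x, MeasurableSet (A' x) := by
    intro x
    by_cases h : x ∈ s
    · rw [key x h]; exact hA _
    · have : A' x = Set.univ := dif_neg h
      rw [this]; exact MeasurableSet.univ
  have hset : (fun ω : Env d => (fun y : s => ω y.1)) ⁻¹' Set.univ.pi A =
      {ω | ∀ x ∈ s, ω x ∈ A' x} := by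
    ext ω
    simp only [Set.mem_preimage, Set.mem_pi, Set.mem_univ, forall_true_left, Set.mem_setOf_eq]
    constructor
    · intro h x hx
      rw [key x hx]
      exact h ⟨x, hx⟩
    · intro h y
      have hh := h y.1 y.2
      rw [key y.1 y.2] at hh
      exact hh
  rw [hset, hIID.2.2 s A' hA'm]
  rw [← Finset.prod_coe_sort s (fun x => μ (A' x))]
  refine Finset.prod_congr rfl fun y _ => ?_
  rw [key y.1 y.2]

lemma lintegral_prod_sites {ℙ : Measure (Env d)} {μ : Measure (Simplex d)}
    (hIID : IsIIDWith d ℙ μ) (s : Finset (V d))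
    (g : V d → Simplex d → ℝ≥0∞) (hg : ∀ y, Measurable (g y)) :
    ∫⁻ ω, ∏ y ∈ s, g y (ω y) ∂ℙ = ∏ y ∈ s, ∫⁻ p, g y p ∂μ := by
  haveI := hIID.2.1
  have hΦ : Measurable (fun ω : Env d => (fun y : s => ω y.1)) :=
    measurable_pi_lambda _ fun y => measurable_pi_apply _
  have hf : Measurable (fun v : s → Simplex d => ∏ y : s, g y.1 (v y)) :=
    Finset.measurable_prod _ fun y _ => (hg y.1).comp (measurable_pi_apply y)
  have hmap : ∫⁻ v : s → Simplex d, ∏ y : s, g y.1 (v y) ∂(ℙ.map (fun ω (y : s) => ω y.1)) =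
      ∫⁻ ω, ∏ y : s, g y.1 (ω y.1) ∂ℙ := lintegral_map hf hΦ
  have h1 : ∀ ω : Env d, ∏ y ∈ s, g y (ω y) = ∏ y : s, g y.1 (ω y.1) :=
    fun ω => (Finset.prod_coe_sort s (fun y => g y (ω y))).symm
  calc ∫⁻ ω, ∏ y ∈ s, g y (ω y) ∂ℙ
      = ∫⁻ ω, ∏ y : s, g y.1 (ω y.1) ∂ℙ := by simp only [h1]
    _ = ∫⁻ v : s → Simplex d, ∏ y : s, g y.1 (v y) ∂(ℙ.map (fun ω (y : s) => ω y.1)) :=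
        hmap.symm
    _ = ∫⁻ v : s → Simplex d, ∏ y : s, g y.1 (v y) ∂(Measure.pi (fun _ : s => μ)) := by
        rw [iid_map_pi hIID s]
    _ = ∏ y : s, ∫⁻ p, g y.1 p ∂μ := lintegral_pi_prod μ (fun y : s => g y.1) (fun y => hg y.1)
    _ = ∏ y ∈ s, ∫⁻ p, g y p ∂μ := Finset.prod_coe_sort s (fun y => ∫⁻ p, g y p ∂μ)

end IIDfact
section Dirichlet
variable {d : ℕ} {μ : Measure (Simplex d)} {β : Fin (2*d) → ℝ}

/-- The common constant in the exit-moment computation. -/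
noncomputable def Cst (β : Fin (2*d) → ℝ) (m : Fin (2*d) → ℕ) : ℝ :=
  (Real.Gamma (∑ i, β i) / Real.Gamma ((∑ i, β i) + (∑ i, (m i : ℝ)) + 1)) *
    ∏ i, (Real.Gamma (β i + m i) / Real.Gamma (β i))

lemma Cst_pos (hd : 0 < d) (hβ : ∀ i, 0 < β i) (m : Fin (2*d) → ℕ) : 0 < Cst β m := by
  have hS : 0 < ∑ i, β i := by
    refine Finset.sum_pos (fun i _ => hβ i) ?_
    refine ⟨⟨0, by omega⟩, Finset.mem_univ _⟩
  have hm : 0 ≤ ∑ i, (m i : ℝ) := Finset.sum_nonneg fun i _ => Nat.cast_nonneg _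
  refine mul_pos (div_pos (Real.Gamma_pos_of_pos hS) (Real.Gamma_pos_of_pos (by linarith))) ?_
  refine Finset.prod_pos fun i _ => div_pos ?_ (Real.Gamma_pos_of_pos (hβ i))
  exact Real.Gamma_pos_of_pos (by have := hβ i; positivity)

lemma dirichlet_lint (hDir : IsDirichlet d μ β) (k : Fin (2*d) → ℕ) :
    ∫⁻ p, ENNReal.ofReal (∏ i, p.1 i ^ k i) ∂μ =
      ENNReal.ofReal ((Real.Gamma (∑ i, β i) /
          Real.Gamma ((∑ i, β i) + (∑ i, (k i : ℝ)))) *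
        ∏ i, (Real.Gamma (β i + k i) / Real.Gamma (β i))) := by
  haveI := hDir.1
  have hmeas : Measurable fun p : Simplex d => ∏ i, p.1 i ^ k i :=
    Finset.measurable_prod _ fun i _ => (measurable_simplex_coord i).pow_const _
  have hnonneg : ∀ p : Simplex d, 0 ≤ ∏ i, p.1 i ^ k i := fun p =>
    Finset.prod_nonneg fun i _ => pow_nonneg (simplex_nonneg p i) _
  have hbound : ∀ p : Simplex d, ∏ i, p.1 i ^ k i ≤ 1 := fun p =>
    Finset.prod_le_one (fun i _ => pow_nonneg (simplex_nonneg p i) _)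
      (fun i _ => pow_le_one₀ (simplex_nonneg p i) (simplex_le_one p i))
  have hint : Integrable (fun p : Simplex d => ∏ i, p.1 i ^ k i) μ := by
    refine Integrable.mono' (integrable_const (1:ℝ)) hmeas.aestronglyMeasurable ?_
    refine ae_of_all _ fun p => ?_
    rw [Real.norm_eq_abs, abs_of_nonneg (hnonneg p)]
    exact hbound p
  rw [← ofReal_integral_eq_lintegral_ofReal hint (ae_of_all _ hnonneg), hDir.2 k]

lemma dirichlet_exit_integral (hd : 0 < d) (hDir : IsDirichlet d μ β) (hβ : ∀ i, 0 < β i)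
    (m : Fin (2*d) → ℕ) (e : Fin (2*d)) (hme : m e = 0) :
    ∫⁻ p, ENNReal.ofReal (∏ i, p.1 i ^ (m i + if i = e then 1 else 0)) ∂μ =
      ENNReal.ofReal (β e * Cst β m) := by
  classical
  rw [dirichlet_lint hDir (fun i => m i + if i = e then 1 else 0)]
  congr 1
  have hsum : (∑ i, ((m i + if i = e then 1 else 0 : ℕ) : ℝ)) = (∑ i, (m i : ℝ)) + 1 := by
    push_cast
    rw [Finset.sum_add_distrib]
    congr 1
    simp
  have hprod : (∏ i, (Real.Gamma (β i + (m i + if i = e then 1 else 0 : ℕ)) /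
      Real.Gamma (β i))) = β e * ∏ i, (Real.Gamma (β i + m i) / Real.Gamma (β i)) := by
    rw [← Finset.mul_prod_erase Finset.univ _ (Finset.mem_univ e),
      ← Finset.mul_prod_erase Finset.univ (fun i => Real.Gamma (β i + m i) / Real.Gamma (β i))
        (Finset.mem_univ e)]
    have h1 : (∏ i ∈ Finset.univ.erase e,
        (Real.Gamma (β i + (m i + if i = e then 1 else 0 : ℕ)) / Real.Gamma (β i))) =
        ∏ i ∈ Finset.univ.erase e, (Real.Gamma (β i + m i) / Real.Gamma (β i)) := by
      refine Finset.prod_congr rfl fun i hi => ?_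
      rw [if_neg (Finset.ne_of_mem_erase hi)]
      norm_num
    rw [h1]
    have h2 : Real.Gamma (β e + (m e + if e = e then 1 else 0 : ℕ)) / Real.Gamma (β e) = β e := by
      rw [if_pos rfl, hme]
      push_cast
      rw [Real.Gamma_add_one (ne_of_gt (hβ e)), mul_div_assoc,
        div_self (ne_of_gt (Real.Gamma_pos_of_pos (hβ e))), mul_one]
    have h3 : Real.Gamma (β e + m e) / Real.Gamma (β e) = 1 := by
      rw [hme]
      push_cast
      rw [add_zero, div_self (ne_of_gt (Real.Gamma_pos_of_pos (hβ e)))]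
    rw [h2, h3, one_mul]
  rw [hsum, hprod, Cst, ← add_assoc]
  simp only [div_eq_mul_inv]
  ring
end Dirichlet
section Main
variable {d : ℕ}

/-- A good prefix: a finite path that stays compatible with `t_i = n`. -/
def GoodSeq (d : ℕ) (hd : 0 < d) (i : ℤ) (n : ℕ) (g : Fin (n+1) → V d) : Prop :=
  (∀ k < n, ¬(pext d n g k ⟨0, hd⟩ = i ∧ pext d n g (k+1) ⟨0, hd⟩ ≠ i)) ∧
    pext d n g n ⟨0, hd⟩ = i

/-- Extension of a finite path by one more point `z`. -/
def extPath (d n : ℕ) (g : Fin (n+1) → V d) (z : V d) : ℕ → V d :=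
  fun k => if k ≤ n then pext d n g k else z

lemma extPath_le {n : ℕ} (g : Fin (n+1) → V d) (z : V d) {k : ℕ} (hk : k ≤ n) :
    extPath d n g z k = pext d n g k := if_pos hk

lemma extPath_gt {n : ℕ} (g : Fin (n+1) → V d) (z : V d) {k : ℕ} (hk : ¬ k ≤ n) :
    extPath d n g z k = z := if_neg hk

def PcSet (d n : ℕ) (g : Fin (n+1) → V d) (e : Fin (2*d)) : Set (Traj d) :=
  {f | (∀ k ≤ n, f k = pext d n g k) ∧ f (n+1) = pext d n g n + dir d e}

def QcSet (d : ℕ) (hd : 0 < d) (i : ℤ) (n : ℕ) (g : Fin (n+1) → V d) : Set (Traj d) :=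
  {f | (∀ k ≤ n, f k = pext d n g k) ∧ f (n+1) ⟨0, hd⟩ ≠ i}

abbrev GoodIdx (d : ℕ) (hd : 0 < d) (i : ℤ) :=
  {p : Σ n : ℕ, Fin (n+1) → V d // GoodSeq d hd i p.1 p.2}

lemma cyl_ext_iff (n : ℕ) (g : Fin (n+1) → V d) (z : V d) (f : Traj d) :
    f ∈ cylSet d (n+1) (extPath d n g z) ↔
      (∀ k ≤ n, f k = pext d n g k) ∧ f (n+1) = z := by
  constructor
  · intro h
    refine ⟨fun k hk => ?_, ?_⟩
    · rw [h k (by omega), extPath_le g z hk]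
    · rw [h (n+1) le_rfl, extPath_gt g z (by omega)]
  · rintro ⟨h1, h2⟩ k hk
    rcases Nat.lt_or_ge k (n+1) with hk' | hk'
    · rw [extPath_le g z (by omega : k ≤ n)]; exact h1 k (by omega)
    · have hkeq : k = n + 1 := by omega
      subst hkeq
      rw [extPath_gt g z (by omega)]; exact h2

lemma PcSet_eq_cyl (n : ℕ) (g : Fin (n+1) → V d) (e : Fin (2*d)) :
    PcSet d n g e = cylSet d (n+1) (extPath d n g (pext d n g n + dir d e)) := by
  ext f
  rw [cyl_ext_iff]
  rfl

lemma measurableSet_Pc (n : ℕ) (g : Fin (n+1) → V d) (e : Fin (2*d)) :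
    MeasurableSet (PcSet d n g e) := by
  rw [PcSet_eq_cyl]; exact measurableSet_cylSet _ _

lemma measurableSet_Qc (hd : 0 < d) (i : ℤ) (n : ℕ) (g : Fin (n+1) → V d) :
    MeasurableSet (QcSet d hd i n g) := by
  have hm : Measurable fun f : Traj d => f (n+1) ⟨0,hd⟩ :=
    (measurable_pi_apply _).comp (measurable_traj_coord (n+1))
  have : QcSet d hd i n g = cylSet d n (pext d n g) ∩
      (fun f : Traj d => f (n+1) ⟨0, hd⟩) ⁻¹' {i}ᶜ := by
    ext f; rfl
  rw [this]
  exact (measurableSet_cylSet _ _).inter (hm (measurableSet_singleton i).compl)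

lemma measurableSet_hitLevelFinite (hd : 0 < d) (i : ℤ) :
    MeasurableSet (hitLevelFinite d hd i) := by
  have hm : ∀ n : ℕ, Measurable fun f : Traj d => f n ⟨0,hd⟩ := fun n =>
    (measurable_pi_apply _).comp (measurable_traj_coord n)
  have : hitLevelFinite d hd i = ⋃ n : ℕ,
      ((fun f : Traj d => f n ⟨0,hd⟩) ⁻¹' {i} ∩
        (fun f : Traj d => f (n+1) ⟨0,hd⟩) ⁻¹' {i}ᶜ) := by
    ext f
    simp only [hitLevelFinite, Set.mem_setOf_eq, Set.mem_iUnion, Set.mem_inter_iff,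
      Set.mem_preimage, Set.mem_singleton_iff, Set.mem_compl_iff]
  rw [this]
  exact MeasurableSet.iUnion fun n => ((hm n) (measurableSet_singleton i)).inter
    ((hm (n+1)) (measurableSet_singleton i).compl)

lemma hitLevelTime_eq (hd : 0 < d) (i : ℤ) (f : Traj d) (n : ℕ)
    (hn : f n ⟨0,hd⟩ = i ∧ f (n+1) ⟨0,hd⟩ ≠ i)
    (hmin : ∀ k < n, ¬(f k ⟨0,hd⟩ = i ∧ f (k+1) ⟨0,hd⟩ ≠ i)) :
    hitLevelTime d hd i f = n := by
  refine le_antisymm (Nat.sInf_le hn) (le_of_not_gt fun hlt => ?_)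
  exact hmin _ hlt (Nat.sInf_mem (⟨n, hn⟩ : Set.Nonempty {n | f n ⟨0,hd⟩ = i ∧ f (n+1) ⟨0,hd⟩ ≠ i}))

/-- uniqueness of the pair (n,g) for which f can satisfy prefix + exit conditions -/
lemma good_unique (hd : 0 < d) (i : ℤ) (f : Traj d)
    {n m : ℕ} {g : Fin (n+1) → V d} {g' : Fin (m+1) → V d}
    (hg : GoodSeq d hd i n g) (hg' : GoodSeq d hd i m g')
    (hp : ∀ k ≤ n, f k = pext d n g k) (hp' : ∀ k ≤ m, f k = pext d m g' k)
    (hx : f (n+1) ⟨0,hd⟩ ≠ i) (hx' : f (m+1) ⟨0,hd⟩ ≠ i) :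
    (⟨n, g⟩ : Σ n : ℕ, Fin (n+1) → V d) = ⟨m, g'⟩ := by
  have hfn : f n ⟨0,hd⟩ = i := by rw [hp n le_rfl]; exact hg.2
  have hfm : f m ⟨0,hd⟩ = i := by rw [hp' m le_rfl]; exact hg'.2
  have hnm : n = m := by
    rcases lt_trichotomy n m with h | h | h
    · exfalso
      have hthis := hg'.1 n h
      rw [← hp' n (by omega), ← hp' (n+1) (by omega)] at hthis
      exact hthis ⟨hfn, hx⟩
    · exact h
    · exfalso
      have hthis := hg.1 m h
      rw [← hp m (by omega), ← hp (m+1) (by omega)] at hthis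
      exact hthis ⟨hfm, hx'⟩
  subst hnm
  refine congrArg _ (funext fun j => ?_)
  have h1 : f j = g ⟨(j:ℕ), by omega⟩ := by
    rw [hp j (by omega)]; exact pext_le g (by omega)
  have h2 : f j = g' ⟨(j:ℕ), by omega⟩ := by
    rw [hp' j (by omega)]; exact pext_le g' (by omega)
  have := h1.symm.trans h2
  simpa using this

lemma decompE (hd : 0 < d) (i : ℤ) (e : Fin (2*d)) (he : (e:ℕ) = 0 ∨ (e:ℕ) = d) :
    hitLevelFinite d hd i ∩
      {f | f (hitLevelTime d hd i f + 1) = f (hitLevelTime d hd i f) + dir d e} =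
    ⋃ p : GoodIdx d hd i, PcSet d p.1.1 p.1.2 e := by
  ext f
  simp only [Set.mem_inter_iff, Set.mem_setOf_eq, Set.mem_iUnion]
  constructor
  · rintro ⟨hfE, hfA⟩
    have hne : Set.Nonempty {n | f n ⟨0,hd⟩ = i ∧ f (n+1) ⟨0,hd⟩ ≠ i} := hfE
    set n := hitLevelTime d hd i f with hn
    have hspec : f n ⟨0,hd⟩ = i ∧ f (n+1) ⟨0,hd⟩ ≠ i := Nat.sInf_mem hne
    have hmin : ∀ k < n, ¬(f k ⟨0,hd⟩ = i ∧ f (k+1) ⟨0,hd⟩ ≠ i) :=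
      fun k hk => Nat.notMem_of_lt_sInf hk
    have hGood : GoodSeq d hd i n (fun j : Fin (n+1) => f j) := by
      constructor
      · intro k hk
        rw [pext_le _ (by omega : k ≤ n), pext_le _ (by omega : k+1 ≤ n)]
        exact hmin k hk
      · rw [pext_le _ (le_refl n)]
        exact hspec.1
    have hmem : f ∈ PcSet d n (fun j : Fin (n+1) => f j) e := by
      constructor
      · intro k hk
        rw [pext_le _ hk]
      · rw [pext_le _ (le_refl n)]
        exact hfA
    exact ⟨⟨⟨n, fun j => f j⟩, hGood⟩, hmem⟩
  · rintro ⟨⟨⟨n, g⟩, hGood'⟩, hmem'⟩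
    have hGood : GoodSeq d hd i n g := hGood'
    have hmem : f ∈ PcSet d n g e := hmem'
    obtain ⟨hpre, hstep⟩ := hmem
    have hfn : f n ⟨0,hd⟩ = i := by rw [hpre n le_rfl]; exact hGood.2
    have hfn1 : f (n+1) ⟨0,hd⟩ ≠ i := by
      have heq : f (n+1) ⟨0,hd⟩ = f n ⟨0,hd⟩ + dir d e ⟨0,hd⟩ := by
        rw [hstep, ← hpre n le_rfl]; rfl
      rw [heq, hfn]
      have hne : dir d e ⟨0,hd⟩ ≠ 0 := (dir_coord0_ne_zero hd).2 he
      intro hcon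
      apply hne
      linarith [hcon]
    have hT : hitLevelTime d hd i f = n := by
      refine hitLevelTime_eq hd i f n ⟨hfn, hfn1⟩ fun k hk => ?_
      have hthis := hGood.1 k hk
      rw [← hpre k (by omega), ← hpre (k+1) (by omega)] at hthis
      exact hthis
    refine ⟨⟨n, hfn, hfn1⟩, ?_⟩
    rw [hT, hstep, ← hpre n le_rfl]

lemma decompQ (hd : 0 < d) (i : ℤ) :
    hitLevelFinite d hd i = ⋃ p : GoodIdx d hd i, QcSet d hd i p.1.1 p.1.2 := by
  ext f
  simp only [Set.mem_iUnion]
  constructor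
  · intro hfE
    have hne : Set.Nonempty {n | f n ⟨0,hd⟩ = i ∧ f (n+1) ⟨0,hd⟩ ≠ i} := hfE
    set n := sInf {n | f n ⟨0,hd⟩ = i ∧ f (n+1) ⟨0,hd⟩ ≠ i} with hn
    have hspec : f n ⟨0,hd⟩ = i ∧ f (n+1) ⟨0,hd⟩ ≠ i := Nat.sInf_mem hne
    have hmin : ∀ k < n, ¬(f k ⟨0,hd⟩ = i ∧ f (k+1) ⟨0,hd⟩ ≠ i) :=
      fun k hk => Nat.notMem_of_lt_sInf hk
    have hGood : GoodSeq d hd i n (fun j : Fin (n+1) => f j) := by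
      constructor
      · intro k hk
        rw [pext_le _ (by omega : k ≤ n), pext_le _ (by omega : k+1 ≤ n)]
        exact hmin k hk
      · rw [pext_le _ (le_refl n)]
        exact hspec.1
    have hmem : f ∈ QcSet d hd i n (fun j : Fin (n+1) => f j) := by
      constructor
      · intro k hk
        rw [pext_le _ hk]
      · exact hspec.2
    exact ⟨⟨⟨n, fun j => f j⟩, hGood⟩, hmem⟩
  · rintro ⟨⟨⟨n, g⟩, hGood'⟩, hmem'⟩
    have hGood : GoodSeq d hd i n g := hGood'
    have hmem : f ∈ QcSet d hd i n g := hmem'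
    obtain ⟨hpre, hlast⟩ := hmem
    have hfn : f n ⟨0,hd⟩ = i := by rw [hpre n le_rfl]; exact hGood.2
    exact ⟨n, hfn, hlast⟩

lemma Pc_exit (hd : 0 < d) (i : ℤ) {e : Fin (2*d)} (he : (e:ℕ) = 0 ∨ (e:ℕ) = d)
    {n : ℕ} {g : Fin (n+1) → V d} (hGood : GoodSeq d hd i n g) {f : Traj d}
    (hpre : ∀ k ≤ n, f k = pext d n g k) (hstep : f (n+1) = pext d n g n + dir d e) :
    f (n+1) ⟨0,hd⟩ ≠ i := by
  have hfn : f n ⟨0,hd⟩ = i := by rw [hpre n le_rfl]; exact hGood.2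
  have heq : f (n+1) ⟨0,hd⟩ = f n ⟨0,hd⟩ + dir d e ⟨0,hd⟩ := by
    rw [hstep, ← hpre n le_rfl]; rfl
  rw [heq, hfn]
  have hne : dir d e ⟨0,hd⟩ ≠ 0 := (dir_coord0_ne_zero hd).2 he
  intro hcon
  apply hne
  linarith [hcon]

lemma pairwise_Pc (hd : 0 < d) (i : ℤ) (e : Fin (2*d)) (he : (e:ℕ) = 0 ∨ (e:ℕ) = d) :
    Pairwise (Function.onFun Disjoint fun p : GoodIdx d hd i => PcSet d p.1.1 p.1.2 e) := by
  rintro ⟨⟨n, g⟩, hg'⟩ ⟨⟨m, g'⟩, hg''⟩ hne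
  have hg : GoodSeq d hd i n g := hg'
  have hgm : GoodSeq d hd i m g' := hg''
  rw [Function.onFun, Set.disjoint_left]
  rintro f hmem1' hmem2'
  have hmem1 : f ∈ PcSet d n g e := hmem1'
  have hmem2 : f ∈ PcSet d m g' e := hmem2'
  obtain ⟨hp, hs⟩ := hmem1
  obtain ⟨hp', hs'⟩ := hmem2
  exact hne (Subtype.ext (good_unique hd i f hg hgm hp hp'
    (Pc_exit hd i he hg hp hs) (Pc_exit hd i he hgm hp' hs')))

lemma pairwise_Qc (hd : 0 < d) (i : ℤ) :
    Pairwise (Function.onFun Disjoint fun p : GoodIdx d hd i => QcSet d hd i p.1.1 p.1.2) := by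
  rintro ⟨⟨n, g⟩, hg'⟩ ⟨⟨m, g'⟩, hg''⟩ hne
  have hg : GoodSeq d hd i n g := hg'
  have hgm : GoodSeq d hd i m g' := hg''
  rw [Function.onFun, Set.disjoint_left]
  rintro f hmem1' hmem2'
  have hmem1 : f ∈ QcSet d hd i n g := hmem1'
  have hmem2 : f ∈ QcSet d hd i m g' := hmem2'
  obtain ⟨hp, hs⟩ := hmem1
  obtain ⟨hp', hs'⟩ := hmem2
  exact hne (Subtype.ext (good_unique hd i f hg hgm hp hp' hs hs'))

end Main
section Measures
variable {d : ℕ} {Pq : Env d → V d → Measure (Traj d)}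

def fin0 (d : ℕ) (hd : 0 < d) : Fin (2*d) := ⟨0, by omega⟩
def find (d : ℕ) (hd : 0 < d) : Fin (2*d) := ⟨d, by omega⟩

lemma annealed_cyl (hQ : IsQuenchedLaw d Pq) (ℙ : Measure (Env d)) (n : ℕ) (σ : ℕ → V d) :
    annealed d ℙ Pq 0 (cylSet d n σ) =
      ∫⁻ ω, ENNReal.ofReal ((if σ 0 = 0 then 1 else 0) *
        ∏ k ∈ Finset.range n, trans d ω (σ k) (σ (k+1))) ∂ℙ := by
  rw [annealed_apply hQ ℙ (measurableSet_cylSet n σ)]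
  exact lintegral_congr fun ω => Pq_cyl hQ ω 0 n σ

lemma annealed_ext_zero (hQ : IsQuenchedLaw d Pq) (ℙ : Measure (Env d))
    {n : ℕ} {g : Fin (n+1) → V d} {z : V d} (hz : ∀ j, z ≠ pext d n g n + dir d j) :
    annealed d ℙ Pq 0 (cylSet d (n+1) (extPath d n g z)) = 0 := by
  rw [annealed_cyl hQ ℙ]
  have hzero : ∀ ω : Env d, (if extPath d n g z 0 = 0 then (1:ℝ) else 0) *
      ∏ k ∈ Finset.range (n+1),
        trans d ω (extPath d n g z k) (extPath d n g z (k+1)) = 0 := by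
    intro ω
    have hlast : trans d ω (extPath d n g z n) (extPath d n g z (n+1)) = 0 := by
      rw [extPath_le g z le_rfl, extPath_gt g z (by omega)]
      exact trans_eq_zero ω hz
    rw [Finset.prod_eq_zero (Finset.self_mem_range_succ n) hlast, mul_zero]
  simp only [hzero, ENNReal.ofReal_zero, lintegral_zero]

lemma annealed_Qc (hd : 0 < d) (hQ : IsQuenchedLaw d Pq) (ℙ : Measure (Env d))
    {i : ℤ} {n : ℕ} {g : Fin (n+1) → V d} (hGood : GoodSeq d hd i n g) :
    annealed d ℙ Pq 0 (QcSet d hd i n g) =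
      annealed d ℙ Pq 0 (PcSet d n g (fin0 d hd)) +
        annealed d ℙ Pq 0 (PcSet d n g (find d hd)) := by
  classical
  set x := pext d n g n with hx
  set Bad : Set (V d) :=
    {z | z ⟨0,hd⟩ ≠ i ∧ z ≠ x + dir d (fin0 d hd) ∧ z ≠ x + dir d (find d hd)} with hBad
  set R : Set (Traj d) := ⋃ z : Bad, cylSet d (n+1) (extPath d n g z.1) with hR
  have hdecomp : QcSet d hd i n g = (PcSet d n g (fin0 d hd) ∪ PcSet d n g (find d hd)) ∪ R := by
    ext f
    constructor
    · rintro ⟨hpre, hlast⟩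
      by_cases h1 : f (n+1) = x + dir d (fin0 d hd)
      · exact Or.inl (Or.inl ⟨hpre, h1⟩)
      by_cases h2 : f (n+1) = x + dir d (find d hd)
      · exact Or.inl (Or.inr ⟨hpre, h2⟩)
      · refine Or.inr (Set.mem_iUnion.2 ⟨⟨f (n+1), hlast, h1, h2⟩, ?_⟩)
        exact (cyl_ext_iff n g (f (n+1)) f).2 ⟨hpre, rfl⟩
    · rintro ((⟨hpre, hstep⟩ | ⟨hpre, hstep⟩) | hr)
      · exact ⟨hpre, Pc_exit hd i (Or.inl rfl) hGood hpre hstep⟩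
      · exact ⟨hpre, Pc_exit hd i (Or.inr rfl) hGood hpre hstep⟩
      · obtain ⟨z, hz⟩ := Set.mem_iUnion.1 hr
        obtain ⟨hpre, hlast⟩ := (cyl_ext_iff n g z.1 f).1 hz
        refine ⟨hpre, ?_⟩
        rw [hlast]
        exact z.2.1
  have hRnull : annealed d ℙ Pq 0 R = 0 := by
    rw [hR]
    refine measure_iUnion_null fun z => ?_
    refine annealed_ext_zero hQ ℙ fun j hj => ?_
    have hxx : x ⟨0,hd⟩ = i := hGood.2
    have hcoord : z.1 ⟨0,hd⟩ = x ⟨0,hd⟩ + dir d j ⟨0,hd⟩ := by rw [hj]; rfl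
    by_cases hj0 : dir d j ⟨0,hd⟩ = 0
    · apply z.2.1
      rw [hcoord, hj0, add_zero, hxx]
    · have := (dir_coord0_ne_zero hd).1 hj0
      rcases this with h | h
      · exact z.2.2.1 (by rw [hj]; congr 1; exact congrArg (dir d) (Fin.ext h))
      · exact z.2.2.2 (by rw [hj]; congr 1; exact congrArg (dir d) (Fin.ext h))
  have hdisj : Disjoint (PcSet d n g (fin0 d hd)) (PcSet d n g (find d hd)) := by
    rw [Set.disjoint_left]
    rintro f ⟨_, h1⟩ ⟨_, h2⟩
    have : dir d (fin0 d hd) = dir d (find d hd) := by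
      have := h1.symm.trans h2
      exact add_left_cancel this
    have := dir_injective d this
    have hval : (0:ℕ) = d := congrArg Fin.val this
    omega
  have hUR : annealed d ℙ Pq 0 ((PcSet d n g (fin0 d hd) ∪ PcSet d n g (find d hd)) ∪ R) =
      annealed d ℙ Pq 0 (PcSet d n g (fin0 d hd) ∪ PcSet d n g (find d hd)) := by
    refine le_antisymm ?_ (measure_mono Set.subset_union_left)
    calc annealed d ℙ Pq 0 ((PcSet d n g (fin0 d hd) ∪ PcSet d n g (find d hd)) ∪ R) ≤
        annealed d ℙ Pq 0 (PcSet d n g (fin0 d hd) ∪ PcSet d n g (find d hd)) +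
          annealed d ℙ Pq 0 R := measure_union_le _ _
    _ = annealed d ℙ Pq 0 (PcSet d n g (fin0 d hd) ∪ PcSet d n g (find d hd)) := by
        rw [hRnull, add_zero]
  rw [hdecomp, hUR, measure_union hdisj (measurableSet_Pc n g (find d hd))]
end Measures
section Core
variable {d : ℕ} {Pq : Env d → V d → Measure (Traj d)}
  {ℙ : Measure (Env d)} {μ : Measure (Simplex d)} {β : Fin (2*d) → ℝ}

lemma annealed_ext_zero_start (hQ : IsQuenchedLaw d Pq) (ℙ : Measure (Env d))
    {n : ℕ} {g : Fin (n+1) → V d} (z : V d) (h0 : pext d n g 0 ≠ 0) :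
    annealed d ℙ Pq 0 (cylSet d (n+1) (extPath d n g z)) = 0 := by
  rw [annealed_cyl hQ ℙ]
  have h0' : extPath d n g z 0 ≠ 0 := by
    rw [extPath_le _ _ (Nat.zero_le n)]; exact h0
  have hzero : ∀ ω : Env d, (if extPath d n g z 0 = 0 then (1:ℝ) else 0) *
      ∏ k ∈ Finset.range (n+1),
        trans d ω (extPath d n g z k) (extPath d n g z (k+1)) = 0 := by
    intro ω
    rw [if_neg h0', zero_mul]
  simp only [hzero, ENNReal.ofReal_zero, lintegral_zero]

lemma annealed_ext_zero_invalid (hQ : IsQuenchedLaw d Pq) (ℙ : Measure (Env d))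
    {n : ℕ} {g : Fin (n+1) → V d} (z : V d) {k : ℕ} (hk : k < n)
    (hbad : ∀ j, pext d n g (k+1) ≠ pext d n g k + dir d j) :
    annealed d ℙ Pq 0 (cylSet d (n+1) (extPath d n g z)) = 0 := by
  rw [annealed_cyl hQ ℙ]
  have hzero : ∀ ω : Env d, (if extPath d n g z 0 = 0 then (1:ℝ) else 0) *
      ∏ kk ∈ Finset.range (n+1),
        trans d ω (extPath d n g z kk) (extPath d n g z (kk+1)) = 0 := by
    intro ω
    have hfac : trans d ω (extPath d n g z k) (extPath d n g z (k+1)) = 0 := by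
      rw [extPath_le _ _ (by omega : k ≤ n), extPath_le _ _ (by omega : k+1 ≤ n)]
      exact trans_eq_zero ω hbad
    rw [Finset.prod_eq_zero (Finset.mem_range.2 (by omega)) hfac, mul_zero]
  simp only [hzero, ENNReal.ofReal_zero, lintegral_zero]

lemma annealed_Pc_repr (hd : 0 < d) (hQ : IsQuenchedLaw d Pq) (hIID : IsIIDWith d ℙ μ)
    (hDir : IsDirichlet d μ β) (hβ : ∀ i, 0 < β i)
    {i : ℤ} {n : ℕ} {g : Fin (n+1) → V d} (hGood : GoodSeq d hd i n g) :
    (annealed d ℙ Pq 0 (PcSet d n g (fin0 d hd)) = 0 ∧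
      annealed d ℙ Pq 0 (PcSet d n g (find d hd)) = 0) ∨
    ∃ (C : ℝ) (W : ℝ≥0∞), 0 ≤ C ∧
      annealed d ℙ Pq 0 (PcSet d n g (fin0 d hd)) =
        ENNReal.ofReal (β (fin0 d hd) * C) * W ∧
      annealed d ℙ Pq 0 (PcSet d n g (find d hd)) =
        ENNReal.ofReal (β (find d hd) * C) * W := by
  classical
  by_cases hstart : pext d n g 0 = 0
  case neg =>
    left
    rw [PcSet_eq_cyl, PcSet_eq_cyl]
    exact ⟨annealed_ext_zero_start hQ ℙ _ hstart, annealed_ext_zero_start hQ ℙ _ hstart⟩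
  by_cases hval : ∀ k, k < n → ∃ j, pext d n g (k+1) = pext d n g k + dir d j
  case neg =>
    left
    push_neg at hval
    obtain ⟨k, hk, hbad⟩ := hval
    rw [PcSet_eq_cyl, PcSet_eq_cyl]
    exact ⟨annealed_ext_zero_invalid hQ ℙ _ hk hbad, annealed_ext_zero_invalid hQ ℙ _ hk hbad⟩
  -- main case
  have hch : ∀ k, ∃ j : Fin (2*d), k < n → pext d n g (k+1) = pext d n g k + dir d j := by
    intro k
    by_cases hk : k < n
    · obtain ⟨j, hj⟩ := hval k hk
      exact ⟨j, fun _ => hj⟩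
    · exact ⟨fin0 d hd, fun h => absurd h hk⟩
  choose jj hjj using hch
  -- notation
  set x : V d := pext d n g n with hxdef
  set sites : Finset (V d) := insert x ((Finset.range n).image (fun k => pext d n g k))
    with hsites
  set Pfun : V d → Simplex d → ℝ :=
    (fun y p => ∏ k ∈ (Finset.range n).filter (fun k => pext d n g k = y), p.1 (jj k))
    with hPfun
  have hxmem : x ∈ sites := Finset.mem_insert_self x _
  have hPnonneg : ∀ y p, 0 ≤ Pfun y p := fun y p =>
    Finset.prod_nonneg fun k _ => simplex_nonneg p (jj k)
  have hPmeas : ∀ y, Measurable (fun p : Simplex d => Pfun y p) := fun y =>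
    Finset.measurable_prod _ fun k _ => measurable_simplex_coord (jj k)
  -- the key representation of the annealed measure of Pc
  have key : ∀ e : Fin (2*d), annealed d ℙ Pq 0 (PcSet d n g e) =
      (∫⁻ p, ENNReal.ofReal (Pfun x p * p.1 e) ∂μ) *
        ∏ y ∈ sites.erase x, ∫⁻ p, ENNReal.ofReal (Pfun y p) ∂μ := by
    intro e
    rw [PcSet_eq_cyl, annealed_cyl hQ ℙ]
    have hpoint : ∀ ω : Env d,
        ENNReal.ofReal ((if extPath d n g (x + dir d e) 0 = 0 then (1:ℝ) else 0) *
          ∏ k ∈ Finset.range (n+1), trans d ω (extPath d n g (x + dir d e) k)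
            (extPath d n g (x + dir d e) (k+1))) =
        ∏ y ∈ sites, ENNReal.ofReal (Pfun y (ω y) * (if y = x then (ω y).1 e else 1)) := by
      intro ω
      have h00 : extPath d n g (x + dir d e) 0 = 0 := by
        rw [extPath_le _ _ (Nat.zero_le n)]; exact hstart
      rw [if_pos h00, one_mul]
      have hprod : ∏ k ∈ Finset.range (n+1), trans d ω (extPath d n g (x + dir d e) k)
          (extPath d n g (x + dir d e) (k+1)) =
          (∏ k ∈ Finset.range n, (ω (pext d n g k)).1 (jj k)) * (ω x).1 e := by
        rw [Finset.prod_range_succ]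
        congr 1
        · refine Finset.prod_congr rfl fun k hk => ?_
          have hk' : k < n := Finset.mem_range.1 hk
          rw [extPath_le _ _ (by omega : k ≤ n), extPath_le _ _ (by omega : k+1 ≤ n),
            hjj k hk']
          exact trans_eq_of_step ω _ (jj k)
        · rw [extPath_le _ _ (le_refl n), extPath_gt _ _ (by omega)]
          exact trans_eq_of_step ω x e
      rw [hprod]
      have hmaps : ∀ k ∈ Finset.range n, pext d n g k ∈ sites := fun k hk =>
        Finset.mem_insert_of_mem (Finset.mem_image_of_mem _ hk)
      have hfib : ∏ y ∈ sites, Pfun y (ω y) =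
          ∏ k ∈ Finset.range n, (ω (pext d n g k)).1 (jj k) := by
        rw [← Finset.prod_fiberwise_of_maps_to hmaps
          (fun k => (ω (pext d n g k)).1 (jj k))]
        refine Finset.prod_congr rfl fun y _ => ?_
        rw [hPfun]
        refine Finset.prod_congr rfl fun k hk => ?_
        rw [(Finset.mem_filter.1 hk).2]
      have hite : ∏ y ∈ sites, (if y = x then (ω y).1 e else 1) = (ω x).1 e := by
        rw [Finset.prod_ite_eq' sites x (fun y => (ω y).1 e), if_pos hxmem]
      have hnn : ∀ y ∈ sites, 0 ≤ Pfun y (ω y) * (if y = x then (ω y).1 e else 1) := by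
        intro y _
        refine mul_nonneg (hPnonneg y (ω y)) ?_
        split
        · exact simplex_nonneg _ _
        · exact zero_le_one
      rw [← ENNReal.ofReal_prod_of_nonneg hnn, Finset.prod_mul_distrib, hfib, hite]
    rw [lintegral_congr hpoint]
    have hgmeas : ∀ y : V d, Measurable
        (fun p : Simplex d => ENNReal.ofReal (Pfun y p * (if y = x then p.1 e else 1))) := by
      intro y
      refine ENNReal.measurable_ofReal.comp ?_
      refine (hPmeas y).mul ?_
      by_cases hy : y = x
      · simpa [hy] using measurable_simplex_coord e
      · simpa [hy] using measurable_const (α := ℝ)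
    rw [lintegral_prod_sites hIID sites _ hgmeas]
    rw [← Finset.mul_prod_erase sites _ hxmem]
    congr 1
    · refine lintegral_congr fun p => ?_
      rw [if_pos rfl]
    · refine Finset.prod_congr rfl fun y hy => ?_
      refine lintegral_congr fun p => ?_
      rw [if_neg (Finset.mem_erase.1 hy).1, mul_one]
  -- exponent vector at the exit site
  set m : Fin (2*d) → ℕ :=
    (fun ii => ((Finset.range n).filter (fun k => pext d n g k = x ∧ jj k = ii)).card)
    with hm
  have hMx : ∀ (e : Fin (2*d)) (p : Simplex d),
      Pfun x p * p.1 e = ∏ ii, p.1 ii ^ (m ii + if ii = e then 1 else 0) := by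
    intro e p
    have h1 : Pfun x p = ∏ ii : Fin (2*d), p.1 ii ^ m ii := by
      show (∏ k ∈ (Finset.range n).filter (fun k => pext d n g k = x), p.1 (jj k)) =
        ∏ ii : Fin (2*d), p.1 ii ^ m ii
      rw [← Finset.prod_fiberwise ((Finset.range n).filter (fun k => pext d n g k = x)) jj
        (fun k => p.1 (jj k))]
      refine Finset.prod_congr rfl fun ii _ => ?_
      rw [Finset.filter_filter]
      calc ∏ k ∈ (Finset.range n).filter (fun k => pext d n g k = x ∧ jj k = ii), p.1 (jj k)
          = ∏ k ∈ (Finset.range n).filter (fun k => pext d n g k = x ∧ jj k = ii), p.1 ii := by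
            refine Finset.prod_congr rfl fun k hk => ?_
            rw [(Finset.mem_filter.1 hk).2.2]
        _ = p.1 ii ^ m ii := Finset.prod_const _
    rw [h1]
    simp only [pow_add]
    rw [Finset.prod_mul_distrib]
    congr 1
    have hh : ∀ ii : Fin (2*d), p.1 ii ^ (if ii = e then 1 else 0) =
        (if ii = e then p.1 ii else 1) := by
      intro ii; split <;> simp
    simp only [hh]
    rw [Finset.prod_ite_eq' Finset.univ e (fun ii => p.1 ii), if_pos (Finset.mem_univ e)]
  have hm0 : ∀ e : Fin (2*d), ((e:ℕ) = 0 ∨ (e:ℕ) = d) → m e = 0 := by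
    intro e he
    rw [hm, Finset.card_eq_zero, Finset.filter_eq_empty_iff]
    intro k hk
    rintro ⟨hkx, hkj⟩
    have hk' : k < n := Finset.mem_range.1 hk
    have h1 : pext d n g k ⟨0,hd⟩ = i := by rw [hkx]; exact hGood.2
    have h2 : pext d n g (k+1) ⟨0,hd⟩ = i := by
      by_contra hcon
      exact hGood.1 k hk' ⟨h1, hcon⟩
    have h3 : pext d n g (k+1) ⟨0,hd⟩ = pext d n g k ⟨0,hd⟩ + dir d (jj k) ⟨0,hd⟩ := by
      rw [hjj k hk']; rfl
    have h4 : dir d (jj k) ⟨0,hd⟩ = 0 := by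
      rw [h1, h2] at h3; linarith
    have h5 : ¬(((jj k : ℕ) = 0) ∨ ((jj k : ℕ) = d)) := fun hcon =>
      ((dir_coord0_ne_zero hd).2 hcon) h4
    apply h5
    rw [hkj]
    exact he
  have hIx : ∀ e : Fin (2*d), ((e:ℕ) = 0 ∨ (e:ℕ) = d) →
      ∫⁻ p, ENNReal.ofReal (Pfun x p * p.1 e) ∂μ = ENNReal.ofReal (β e * Cst β m) := by
    intro e he
    have hcong : ∀ p : Simplex d, ENNReal.ofReal (Pfun x p * p.1 e) =
        ENNReal.ofReal (∏ ii, p.1 ii ^ (m ii + if ii = e then 1 else 0)) := fun p => by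
      rw [hMx e p]
    rw [lintegral_congr hcong, dirichlet_exit_integral hd hDir hβ m e (hm0 e he)]
  right
  refine ⟨Cst β m, ∏ y ∈ sites.erase x, ∫⁻ p, ENNReal.ofReal (Pfun y p) ∂μ,
    (Cst_pos hd hβ m).le, ?_, ?_⟩
  · rw [key (fin0 d hd), hIx (fin0 d hd) (Or.inl rfl)]
  · rw [key (find d hd), hIx (find d hd) (Or.inr rfl)]

end Core
section Final
variable {d : ℕ} {Pq : Env d → V d → Measure (Traj d)}
  {ℙ : Measure (Env d)} {μ : Measure (Simplex d)} {β : Fin (2*d) → ℝ}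

lemma annealed_Pc_ratio (hd : 0 < d) (hQ : IsQuenchedLaw d Pq) (hIID : IsIIDWith d ℙ μ)
    (hDir : IsDirichlet d μ β) (hβ : ∀ i, 0 < β i)
    {i : ℤ} {n : ℕ} {g : Fin (n+1) → V d} (hGood : GoodSeq d hd i n g)
    (e : Fin (2*d)) (he : e = fin0 d hd ∨ e = find d hd) :
    annealed d ℙ Pq 0 (PcSet d n g e) =
      ENNReal.ofReal (β e / (β (fin0 d hd) + β (find d hd))) *
        annealed d ℙ Pq 0 (QcSet d hd i n g) := by
  have hsum : 0 < β (fin0 d hd) + β (find d hd) := add_pos (hβ _) (hβ _)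
  rw [annealed_Qc hd hQ ℙ hGood]
  rcases annealed_Pc_repr hd hQ hIID hDir hβ hGood with ⟨h1, h2⟩ | ⟨C, W, hC, hA, hB⟩
  · rcases he with rfl | rfl
    · rw [h1, h2]; simp
    · rw [h1, h2]; simp
  · have halg : ∀ be : ℝ, be / (β (fin0 d hd) + β (find d hd)) *
        (β (fin0 d hd) * C + β (find d hd) * C) = be * C := by
      intro be
      field_simp
    rcases he with rfl | rfl
    · rw [hA, hB, ← add_mul, ← ENNReal.ofReal_add (mul_nonneg (hβ _).le hC)
        (mul_nonneg (hβ _).le hC), ← mul_assoc,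
        ← ENNReal.ofReal_mul (div_nonneg (hβ _).le hsum.le), halg]
    · rw [hA, hB, ← add_mul, ← ENNReal.ofReal_add (mul_nonneg (hβ _).le hC)
        (mul_nonneg (hβ _).le hC), ← mul_assoc,
        ← ENNReal.ofReal_mul (div_nonneg (hβ _).le hsum.le), halg]

lemma annealed_EA (hd : 0 < d) (hQ : IsQuenchedLaw d Pq) (hIID : IsIIDWith d ℙ μ)
    (hDir : IsDirichlet d μ β) (hβ : ∀ i, 0 < β i) (i : ℤ)
    (e : Fin (2*d)) (he : e = fin0 d hd ∨ e = find d hd) :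
    annealed d ℙ Pq 0 (hitLevelFinite d hd i ∩
      {f | f (hitLevelTime d hd i f + 1) = f (hitLevelTime d hd i f) + dir d e}) =
    ENNReal.ofReal (β e / (β (fin0 d hd) + β (find d hd))) *
      annealed d ℙ Pq 0 (hitLevelFinite d hd i) := by
  have hevals : (e:ℕ) = 0 ∨ (e:ℕ) = d := by
    rcases he with rfl | rfl
    · exact Or.inl rfl
    · exact Or.inr rfl
  rw [decompE hd i e hevals,
    measure_iUnion (pairwise_Pc hd i e hevals) (fun p => measurableSet_Pc _ _ _)]
  have hcong : ∀ p : GoodIdx d hd i,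
      annealed d ℙ Pq 0 (PcSet d p.1.1 p.1.2 e) =
        ENNReal.ofReal (β e / (β (fin0 d hd) + β (find d hd))) *
          annealed d ℙ Pq 0 (QcSet d hd i p.1.1 p.1.2) := fun p =>
    annealed_Pc_ratio hd hQ hIID hDir hβ p.2 e he
  rw [tsum_congr hcong, ENNReal.tsum_mul_left,
    ← measure_iUnion (pairwise_Qc hd i) (fun p => measurableSet_Qc hd i _ _),
    ← decompQ hd i]

end Final

/-- **Lemma (exit direction from a hyperplane in a Dirichlet environment).**
In a Dirichlet environment with parameters `(β₁,…,β_{2d})`, conditionally on `t_i < ∞`,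
the walk leaves the hyperplane `l_i` in direction `e₁` with probability
`β₁/(β₁+β_{1+d})`; consequently the probability that for some `0 ≤ i ≤ L-1` it leaves
`l_i` for the first time in direction `-e₁` is at most `L·β_{1+d}/(β₁+β_{1+d})`. -/
theorem dirichlet_exit_direction
    (d : ℕ) (hd : 1 ≤ d)
    (β : Fin (2 * d) → ℝ) (hβ : ∀ i, 0 < β i)
    (ℙ : Measure (Env d)) (μ : Measure (Simplex d))
    (Pq : Env d → V d → Measure (Traj d))
    (hQ : IsQuenchedLaw d Pq) (hIID : IsIIDWith d ℙ μ) (hDir : IsDirichlet d μ β) :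
    (∀ i : ℤ, 0 < (annealed d ℙ Pq 0) (hitLevelFinite d (by omega) i) →
      (ProbabilityTheory.cond (annealed d ℙ Pq 0) (hitLevelFinite d (by omega) i))
          {f | f (hitLevelTime d (by omega) i f + 1) =
            f (hitLevelTime d (by omega) i f) + dir d ⟨0, by omega⟩} =
        ENNReal.ofReal (β ⟨0, by omega⟩ / (β ⟨0, by omega⟩ + β ⟨d, by omega⟩))) ∧
    ∀ L : ℕ,
      ((annealed d ℙ Pq 0)
          {f | ∃ i : ℕ, i < L ∧ f ∈ hitLevelFinite d (by omega) (i : ℤ) ∧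
            f (hitLevelTime d (by omega) (i : ℤ) f + 1) =
              f (hitLevelTime d (by omega) (i : ℤ) f) + dir d ⟨d, by omega⟩}).toReal ≤
        L * (β ⟨d, by omega⟩ / (β ⟨0, by omega⟩ + β ⟨d, by omega⟩)) := by
  have hd' : 0 < d := by omega
  haveI hPprob : IsProbabilityMeasure ℙ := hIID.1
  haveI hAprob : IsProbabilityMeasure (annealed d ℙ Pq 0) := annealed_prob hQ ℙ
  constructor
  · intro i hpos
    rw [ProbabilityTheory.cond_apply (measurableSet_hitLevelFinite (by omega) i)]
    rw [annealed_EA (by omega) hQ hIID hDir hβ i ⟨0, by omega⟩ (Or.inl rfl)]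
    have hne : annealed d ℙ Pq 0 (hitLevelFinite d (by omega) i) ≠ 0 := ne_of_gt hpos
    have hnt : annealed d ℙ Pq 0 (hitLevelFinite d (by omega) i) ≠ ⊤ := measure_ne_top _ _
    rw [mul_comm, mul_assoc, ENNReal.mul_inv_cancel hne hnt, mul_one]
    rfl
  · intro L
    have hq0 : (0:ℝ) ≤ β ⟨d, by omega⟩ / (β ⟨0, by omega⟩ + β ⟨d, by omega⟩) :=
      div_nonneg (hβ _).le (add_pos (hβ ⟨0, by omega⟩) (hβ ⟨d, by omega⟩)).le
    refine ENNReal.toReal_le_of_le_ofReal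
      (mul_nonneg (Nat.cast_nonneg L) hq0) ?_
    have hsub : {f : Traj d | ∃ i : ℕ, i < L ∧ f ∈ hitLevelFinite d (by omega) (i : ℤ) ∧
        f (hitLevelTime d (by omega) (i : ℤ) f + 1) =
          f (hitLevelTime d (by omega) (i : ℤ) f) + dir d ⟨d, by omega⟩} ⊆
        ⋃ i ∈ Finset.range L, (hitLevelFinite d hd' (i : ℤ) ∩
          {f : Traj d | f (hitLevelTime d hd' (i : ℤ) f + 1) =
            f (hitLevelTime d hd' (i : ℤ) f) + dir d ⟨d, by omega⟩}) := by
      rintro f ⟨i, hi, hfE, hfA⟩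
      exact Set.mem_biUnion (Finset.mem_range.2 hi) ⟨hfE, hfA⟩
    calc annealed d ℙ Pq 0 {f : Traj d | ∃ i : ℕ, i < L ∧
            f ∈ hitLevelFinite d (by omega) (i : ℤ) ∧
            f (hitLevelTime d (by omega) (i : ℤ) f + 1) =
              f (hitLevelTime d (by omega) (i : ℤ) f) + dir d ⟨d, by omega⟩}
        ≤ annealed d ℙ Pq 0 (⋃ i ∈ Finset.range L, (hitLevelFinite d hd' (i : ℤ) ∩
            {f : Traj d | f (hitLevelTime d hd' (i : ℤ) f + 1) =
              f (hitLevelTime d hd' (i : ℤ) f) + dir d ⟨d, by omega⟩})) :=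
          measure_mono hsub
      _ ≤ ∑ i ∈ Finset.range L, annealed d ℙ Pq 0 (hitLevelFinite d hd' (i : ℤ) ∩
            {f : Traj d | f (hitLevelTime d hd' (i : ℤ) f + 1) =
              f (hitLevelTime d hd' (i : ℤ) f) + dir d ⟨d, by omega⟩}) :=
          measure_biUnion_finset_le _ _
      _ = ∑ i ∈ Finset.range L,
            ENNReal.ofReal (β ⟨d, by omega⟩ / (β ⟨0, by omega⟩ + β ⟨d, by omega⟩)) *
              annealed d ℙ Pq 0 (hitLevelFinite d hd' (i : ℤ)) :=
          Finset.sum_congr rfl fun i _ =>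
            annealed_EA hd' hQ hIID hDir hβ (i : ℤ) (find d hd') (Or.inr rfl)
      _ ≤ ∑ i ∈ Finset.range L,
            ENNReal.ofReal (β ⟨d, by omega⟩ / (β ⟨0, by omega⟩ + β ⟨d, by omega⟩)) * 1 :=
          Finset.sum_le_sum fun i _ => mul_le_mul_right prob_le_one _
      _ = (L : ℝ≥0∞) *
            ENNReal.ofReal (β ⟨d, by omega⟩ / (β ⟨0, by omega⟩ + β ⟨d, by omega⟩)) := by
          rw [Finset.sum_const, Finset.card_range, mul_one, nsmul_eq_mul]
      _ = ENNReal.ofReal ((L : ℝ) *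
            (β ⟨d, by omega⟩ / (β ⟨0, by omega⟩ + β ⟨d, by omega⟩))) := by
          rw [ENNReal.ofReal_mul (Nat.cast_nonneg L), ENNReal.ofReal_natCast]
end RWRE
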